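/- Main theorem (abstract form): Suppose τ : (sequence of odd-indexed times) → R satisfies the KdV Hirota bilinear identity: for every even formal power series f(z) ∈ R[[z²]], the formal residue Res_{z} [ f(z) · exp(ξ°(t−t',z)) · τ(t − [z^{-1}]) · τ(t' + [z^{-1}]) ] = 0, where ξ°(s,z) = Σ_{k odd} s_k z^k and t ± [z^{-1}] denotes the shift t_k ± z^{-k}/k. Then σ(t) := τ(t/2) satisfies the BKP Hirota bilinear identity: Res_z [ z^{-1} exp(ξ°(t−t',z)) σ(t − 2[z^{-1}]) σ(t' + 2[z^{-1}]) ] = σ(t)σ(t'), where Res_z denotes the coefficient of z^{-1}. -/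

import Mathlib

/-!
Put `u = t/2`, `u' = t'/2` and `E = exp ξ°(u − u', z)`, so that `exp ξ°(t − t', z) = E²`.
Since `ξ°` is odd in `z`, so is `E − E⁻¹ = exp ξ° − exp (−ξ°)`; hence `f := (E − E⁻¹)/z` is even
and `z⁻¹ E² = z⁻¹ + f E`. The KdV identity kills the residue of the `f E`-term. In the remaining
term both `τ(u − [z⁻¹])` and `τ(u' + [z⁻¹])` are power series in `z⁻¹`, so the residue of
`z⁻¹ τ(u − [z⁻¹]) τ(u' + [z⁻¹])` is the product of their constant terms, `τ(u) τ(u') = σ(t) σ(t')`.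
-/

/-- The formal exponential of a power series with zero constant coefficient. -/
noncomputable def expS (R : Type*) [CommRing R] [Algebra ℚ R] (x : PowerSeries R) :
    PowerSeries R :=
  PowerSeries.mk fun n => ∑ k ∈ Finset.range (n + 1),
    ((k.factorial : ℚ)⁻¹ : ℚ) • PowerSeries.coeff n (x ^ k)

/-- `ξ°(s, z) = ∑_{k odd} s_k z^k`, truncated to odd indices `1, 3, …, 2m−1`. -/
noncomputable def xiOdd (R : Type*) [CommRing R] (m : ℕ) (s : Fin m → R) :
    PowerSeries R :=
  ∑ i : Fin m, PowerSeries.monomial (2 * (i : ℕ) + 1) (s i)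

/-- The shifted times `t + c·[z⁻¹]`: the odd time `t_k` (for `k = 2i+1`) becomes
`t_k + c·z^{−k}/k`, as a formal Laurent series in `z`. -/
noncomputable def shiftArg (R : Type*) [CommRing R] [Algebra ℚ R] (m : ℕ)
    (c : ℚ) (t : Fin m → R) : Fin m → LaurentSeries R := fun i =>
  HahnSeries.C (t i) +
    HahnSeries.single (-(2 * (i : ℕ) + 1) : ℤ)
      (algebraMap ℚ R (c / (2 * (i : ℕ) + 1)))

/-- `τ(t + c[z⁻¹])`, for a (polynomial, finitely truncated) tau-function `τ`. -/
noncomputable def tauShift (R : Type*) [CommRing R] [Algebra ℚ R] (m : ℕ)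
    (τ : MvPolynomial (Fin m) R) (c : ℚ) (t : Fin m → R) : LaurentSeries R :=
  MvPolynomial.aeval (shiftArg R m c t) τ

/-- `σ(t + c[z⁻¹])` where `σ(t) := τ(t/2)`. -/
noncomputable def sigmaShift (R : Type*) [CommRing R] [Algebra ℚ R] (m : ℕ)
    (τ : MvPolynomial (Fin m) R) (c : ℚ) (t : Fin m → R) : LaurentSeries R :=
  MvPolynomial.aeval (fun i => (1/2 : ℚ) • shiftArg R m c t i) τ

/-- `σ(t) := τ(t/2)`. -/
noncomputable def sigma' (R : Type*) [CommRing R] [Algebra ℚ R] (m : ℕ)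
    (τ : MvPolynomial (Fin m) R) (t : Fin m → R) : R :=
  MvPolynomial.eval (fun i => (1/2 : ℚ) • t i) τ


namespace PowerSeries

variable {R : Type*} [CommRing R]

lemma coeff_pow_eq_zero_of_lt {x : R⟦X⟧} (hx : constantCoeff x = 0) {k n : ℕ} (h : n < k) :
    coeff n (x ^ k) = 0 :=
  X_pow_dvd_iff.mp (pow_dvd_pow_of_dvd (X_dvd_iff.mpr hx) k) n h

lemma subst_rescale {S : Type*} [CommRing S] [Algebra R S] {a : S⟦X⟧} (ha : HasSubst a)
    (r : R) (f : R⟦X⟧) : subst a (rescale r f) = subst (r • a) f := by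
  rw [rescale_eq_subst, subst_comp_subst_apply (HasSubst.smul_X' r) ha, subst_smul ha, subst_X ha]

lemma rescale_subst {a : R⟦X⟧} (ha : HasSubst a) (r : R) (f : R⟦X⟧) :
    rescale r (subst a f) = subst (rescale r a) f := by
  rw [rescale_eq_subst, rescale_eq_subst, subst_comp_subst_apply ha (HasSubst.smul_X' r)]

variable [Algebra ℚ R]

theorem expS_eq_subst_exp {x : R⟦X⟧} (hx : constantCoeff x = 0) :
    expS R x = subst x (exp R) := by
  ext n
  have hsupp : (Function.support fun d => coeff d (exp R) • coeff n (x ^ d)) ⊆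
      ↑(Finset.range (n + 1)) := fun d hd => by
    by_contra hdn
    simp only [Finset.coe_range, Set.mem_Iio, not_lt] at hdn
    exact hd (by simp only [coeff_pow_eq_zero_of_lt hx (by omega : n < d), smul_zero])
  rw [expS, coeff_mk, coeff_subst' (HasSubst.of_constantCoeff_zero' hx),
    finsum_eq_sum_of_support_subset _ hsupp]
  simp only [coeff_exp, algebraMap_smul, one_div]

lemma coeff_eq_zero_of_rescale_neg_one_eq_neg {g : R⟦X⟧} (hg : rescale (-1 : R) g = -g)
    {n : ℕ} (hn : Even n) : coeff n g = 0 := by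
  have h := congrArg (coeff n) hg
  rw [coeff_rescale, hn.neg_one_pow, one_mul, map_neg] at h
  have h2 : (2 : ℚ) • coeff n g = 0 := by linear_combination (norm := module) h
  simpa using h2

lemma subst_exp_mul_subst_neg_exp {x : R⟦X⟧} (hx : HasSubst x) :
    subst x (exp R) * subst (-x) (exp R) = 1 := by
  rw [← neg_one_smul R x, ← subst_rescale hx, ← subst_mul hx, ← evalNegHom,
    exp_mul_exp_neg_eq_one, ← coe_substAlgHom hx, map_one]

lemma subst_exp_sq {x : R⟦X⟧} (hx : HasSubst x) :
    subst x (exp R) ^ 2 = subst ((2 : R) • x) (exp R) := by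
  rw [← subst_pow hx, exp_pow_eq_rescale_exp, subst_rescale hx, Nat.cast_ofNat]

theorem exists_even_subst_two_smul_exp_eq {x : R⟦X⟧} (hx0 : constantCoeff x = 0)
    (hodd : rescale (-1 : R) x = -x) :
    ∃ f : R⟦X⟧, (∀ n, Odd n → coeff n f = 0) ∧
      subst ((2 : R) • x) (exp R) = 1 + X * f * subst x (exp R) := by
  have hx : HasSubst x := HasSubst.of_constantCoeff_zero' hx0
  have hx' : HasSubst (-x) := HasSubst.of_constantCoeff_zero' (by rw [map_neg, hx0, neg_zero])
  set E := subst x (exp R)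
  set E' := subst (-x) (exp R)
  have hsinh : rescale (-1 : R) (E - E') = -(E - E') := by
    rw [map_sub, rescale_subst hx, rescale_subst hx', hodd, map_neg, hodd, neg_neg, neg_sub]
  obtain ⟨f, hf⟩ : X ∣ E - E' := X_dvd_iff.mpr <| by
    rw [← coeff_zero_eq_constantCoeff_apply]
    exact coeff_eq_zero_of_rescale_neg_one_eq_neg hsinh Even.zero
  refine ⟨f, fun n hn => ?_, ?_⟩
  · rw [← coeff_succ_X_mul, ← hf]
    exact coeff_eq_zero_of_rescale_neg_one_eq_neg hsinh hn.add_one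
  · rw [← subst_exp_sq hx, ← hf, sub_mul, mul_comm E' E, subst_exp_mul_subst_neg_exp hx]
    ring

end PowerSeries

namespace LaurentSeries

variable {R : Type*} [CommRing R]

lemma eq_zero_of_mem_antidiagonal_of_nonpos {x y : LaurentSeries R}
    (hx : ∀ j : ℤ, 0 < j → x.coeff j = 0) (hy : ∀ j : ℤ, 0 < j → y.coeff j = 0)
    {j : ℤ} (hj : 0 ≤ j) {ij : ℤ × ℤ}
    (hij : ij ∈ Finset.antidiagonal x.isPWO_support y.isPWO_support j) :
    ij = (0, 0) ∧ j = 0 := by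
  obtain ⟨hi, hi', hsum⟩ := Finset.mem_antidiagonal.mp hij
  have h1 : ij.1 ≤ 0 := not_lt.mp fun h => hi (hx _ h)
  have h2 : ij.2 ≤ 0 := not_lt.mp fun h => hi' (hy _ h)
  exact ⟨Prod.ext (by omega) (by omega), by omega⟩

lemma coeff_mul_eq_zero_of_pos {x y : LaurentSeries R}
    (hx : ∀ j : ℤ, 0 < j → x.coeff j = 0) (hy : ∀ j : ℤ, 0 < j → y.coeff j = 0)
    {j : ℤ} (hj : 0 < j) : (x * y).coeff j = 0 :=
  Finset.sum_eq_zero fun _ hij =>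
    absurd (eq_zero_of_mem_antidiagonal_of_nonpos hx hy hj.le hij).2 hj.ne'

lemma coeff_zero_mul_of_nonpos {x y : LaurentSeries R}
    (hx : ∀ j : ℤ, 0 < j → x.coeff j = 0) (hy : ∀ j : ℤ, 0 < j → y.coeff j = 0) :
    (x * y).coeff 0 = x.coeff 0 * y.coeff 0 := by
  rw [HahnSeries.coeff_mul, Finset.sum_eq_single (0, 0)]
  · exact fun ij hij hne =>
      absurd (eq_zero_of_mem_antidiagonal_of_nonpos hx hy le_rfl hij).1 hne
  · intro h
    by_contra hne
    exact h (Finset.mem_antidiagonal.mpr ⟨left_ne_zero_of_mul hne,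
      right_ne_zero_of_mul hne, add_zero 0⟩)

variable {σ : Type*} {v : σ → LaurentSeries R}

lemma coeff_aeval_eq_zero_of_pos (hv : ∀ i, ∀ j : ℤ, 0 < j → (v i).coeff j = 0)
    (p : MvPolynomial σ R) {j : ℤ} (hj : 0 < j) : (MvPolynomial.aeval v p).coeff j = 0 := by
  induction p using MvPolynomial.induction_on generalizing j with
  | C a => simp [HahnSeries.algebraMap_apply', hj.ne']
  | add p q hp hq => rw [map_add, HahnSeries.coeff_add, hp hj, hq hj, add_zero]
  | mul_X p i hp =>
    rw [map_mul, MvPolynomial.aeval_X]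
    exact coeff_mul_eq_zero_of_pos (fun _ => hp) (hv i) hj

lemma coeff_zero_aeval (hv : ∀ i, ∀ j : ℤ, 0 < j → (v i).coeff j = 0) (p : MvPolynomial σ R) :
    (MvPolynomial.aeval v p).coeff 0 = MvPolynomial.eval (fun i => (v i).coeff 0) p := by
  induction p using MvPolynomial.induction_on with
  | C a => simp [HahnSeries.algebraMap_apply']
  | add p q hp hq => rw [map_add, HahnSeries.coeff_add, hp, hq, map_add]
  | mul_X p i hp =>
    rw [map_mul, MvPolynomial.aeval_X, map_mul, MvPolynomial.eval_X, ← hp,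
      coeff_zero_mul_of_nonpos (fun _ => coeff_aeval_eq_zero_of_pos hv p) (hv i)]

lemma coeff_neg_one_single_mul (x : LaurentSeries R) :
    (HahnSeries.single (-1 : ℤ) (1 : R) * x).coeff (-1) = x.coeff 0 := by
  simpa using HahnSeries.coeff_single_mul_add (r := (1 : R)) (x := x) (a := 0) (b := -1)

lemma single_neg_one_mul_ofPowerSeries_one_add_X_mul (h : PowerSeries R) :
    HahnSeries.single (-1 : ℤ) (1 : R) * HahnSeries.ofPowerSeries ℤ R (1 + PowerSeries.X * h) =
      HahnSeries.single (-1 : ℤ) (1 : R) + HahnSeries.ofPowerSeries ℤ R h := by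
  rw [map_add, (HahnSeries.ofPowerSeries ℤ R).map_one, map_mul, HahnSeries.ofPowerSeries_X,
    mul_add, mul_one, ← mul_assoc, HahnSeries.single_mul_single]
  norm_num

end LaurentSeries

section KdV

open PowerSeries

variable {R : Type*} [CommRing R]

lemma constantCoeff_xiOdd (m : ℕ) (s : Fin m → R) : constantCoeff (xiOdd R m s) = 0 := by
  simp [xiOdd, ← coeff_zero_eq_constantCoeff_apply, coeff_monomial]

lemma rescale_neg_one_xiOdd (m : ℕ) (s : Fin m → R) :
    rescale (-1 : R) (xiOdd R m s) = -xiOdd R m s := by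
  ext n
  simp only [xiOdd, map_sum, coeff_rescale, coeff_monomial, map_neg, ← Finset.sum_neg_distrib]
  refine Finset.sum_congr rfl fun i _ => ?_
  split_ifs with h
  · rw [h, (odd_two_mul_add_one _).neg_one_pow, neg_one_mul]
  · rw [mul_zero, neg_zero]

lemma xiOdd_add (m : ℕ) (a b : Fin m → R) :
    xiOdd R m (a + b) = xiOdd R m a + xiOdd R m b := by
  simp [xiOdd, Finset.sum_add_distrib]

variable [Algebra ℚ R]

lemma coeff_shiftArg_of_pos (m : ℕ) (c : ℚ) (t : Fin m → R) (i : Fin m) {j : ℤ} (hj : 0 < j) :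
    (shiftArg R m c t i).coeff j = 0 := by
  rw [shiftArg, HahnSeries.coeff_add, HahnSeries.C_apply, HahnSeries.coeff_single_of_ne hj.ne',
    HahnSeries.coeff_single_of_ne (by omega), add_zero]

lemma coeff_zero_shiftArg (m : ℕ) (c : ℚ) (t : Fin m → R) (i : Fin m) :
    (shiftArg R m c t i).coeff 0 = t i := by
  rw [shiftArg, HahnSeries.coeff_add, HahnSeries.C_apply, HahnSeries.coeff_single_same,
    HahnSeries.coeff_single_of_ne (by omega), add_zero]

lemma sigmaShift_eq_tauShift_half (m : ℕ) (τ : MvPolynomial (Fin m) R) (c : ℚ) (t : Fin m → R) :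
    sigmaShift R m τ c t = tauShift R m τ (c / 2) ((1 / 2 : ℚ) • t) := by
  rw [sigmaShift, tauShift]
  congr 2
  funext i
  ext j
  simp only [shiftArg, HahnSeries.coeff_smul, HahnSeries.coeff_add, HahnSeries.C_apply,
    HahnSeries.coeff_single, smul_add, smul_ite, smul_zero, Pi.smul_apply]
  congr 2
  rw [Algebra.smul_def, ← map_mul]
  ring_nf

lemma coeff_tauShift_of_pos (m : ℕ) (τ : MvPolynomial (Fin m) R) (c : ℚ) (t : Fin m → R)
    {j : ℤ} (hj : 0 < j) : (tauShift R m τ c t).coeff j = 0 :=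
  LaurentSeries.coeff_aeval_eq_zero_of_pos (fun i _ => coeff_shiftArg_of_pos m c t i) τ hj

lemma coeff_zero_tauShift (m : ℕ) (τ : MvPolynomial (Fin m) R) (c : ℚ) (t : Fin m → R) :
    (tauShift R m τ c t).coeff 0 = MvPolynomial.eval t τ := by
  rw [tauShift, LaurentSeries.coeff_zero_aeval (fun i _ => coeff_shiftArg_of_pos m c t i)]
  simp only [coeff_zero_shiftArg]

end KdV

open PowerSeries in
/-- **main theorem, truncated form.** Suppose `τ` (a function of the
odd times `t_1, t_3, …, t_{2m−1}`) satisfies the KdV Hirota bilinear identity: for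
every even formal power series `f(z) ∈ R[[z²]]`, the formal residue (coefficient of
`z^{−1}`) of `f(z)·exp(ξ°(t−t',z))·τ(t−[z⁻¹])·τ(t'+[z⁻¹])` vanishes. Then
`σ(t) := τ(t/2)` satisfies the BKP Hirota bilinear identity:
`Res_z [ z^{−1} exp(ξ°(t−t',z)) σ(t−2[z⁻¹]) σ(t'+2[z⁻¹]) ] = σ(t)σ(t')`. -/
theorem kdv_tau_is_bkp_tau (R : Type*) [CommRing R] [Algebra ℚ R] (m : ℕ)
    (τ : MvPolynomial (Fin m) R)
    (hKdV : ∀ f : PowerSeries R, (∀ n : ℕ, Odd n → PowerSeries.coeff n f = 0) →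
      ∀ t t' : Fin m → R,
        ((HahnSeries.ofPowerSeries ℤ R) (f * expS R (xiOdd R m (t - t'))) *
          tauShift R m τ (-1) t * tauShift R m τ 1 t').coeff (-1) = 0) :
    ∀ t t' : Fin m → R,
      (HahnSeries.single (-1 : ℤ) (1 : R) *
        (HahnSeries.ofPowerSeries ℤ R) (expS R (xiOdd R m (t - t'))) *
        sigmaShift R m τ (-2) t * sigmaShift R m τ 2 t').coeff (-1)
      = sigma' R m τ t * sigma' R m τ t' := by
  intro t t'
  set u : Fin m → R := (1 / 2 : ℚ) • t
  set u' : Fin m → R := (1 / 2 : ℚ) • t'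
  have hσ : sigmaShift R m τ (-2) t = tauShift R m τ (-1) u := by
    rw [sigmaShift_eq_tauShift_half]; norm_num [u]
  have hσ' : sigmaShift R m τ 2 t' = tauShift R m τ 1 u' := by
    rw [sigmaShift_eq_tauShift_half]; norm_num [u']
  have hξ : xiOdd R m (t - t') = (2 : R) • xiOdd R m (u - u') := by
    rw [two_smul, ← xiOdd_add]
    congr 1
    ext i
    simp only [u, u', Pi.add_apply, Pi.sub_apply, Pi.smul_apply]
    module
  obtain ⟨f, hf_even, hf⟩ := exists_even_subst_two_smul_exp_eq (constantCoeff_xiOdd m (u - u'))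
    (rescale_neg_one_xiOdd m (u - u'))
  have hsplit : HahnSeries.single (-1 : ℤ) (1 : R) *
      HahnSeries.ofPowerSeries ℤ R (expS R (xiOdd R m (t - t'))) =
      HahnSeries.single (-1 : ℤ) 1 +
        HahnSeries.ofPowerSeries ℤ R (f * expS R (xiOdd R m (u - u'))) := by
    simp only [expS_eq_subst_exp (constantCoeff_xiOdd m _)]
    rw [hξ, hf, mul_assoc X, LaurentSeries.single_neg_one_mul_ofPowerSeries_one_add_X_mul]
  rw [hsplit, hσ, hσ', add_mul, add_mul, HahnSeries.coeff_add, hKdV f hf_even u u', add_zero,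
    mul_assoc, LaurentSeries.coeff_neg_one_single_mul, LaurentSeries.coeff_zero_mul_of_nonpos
      (fun _ => coeff_tauShift_of_pos m τ _ _) (fun _ => coeff_tauShift_of_pos m τ _ _),
    coeff_zero_tauShift, coeff_zero_tauShift]
  rfl
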